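/- Let g(z) = -z^3(7z-4)/(4z-7). For every z with |z| < 1, the iterates g^n(z) converge to 0. Moreover |g^n(z)| ≤ |z|^{3^n} for all n ≥ 1. -/

import Mathlib

/-! Since `‖4z - 7‖² - ‖7z - 4‖² = 33 (1 - ‖z‖²)`, the factor `(7z - 4)/(4z - 7)` has norm at most `1`
on the closed unit disk, so `‖g z‖ ≤ ‖z‖³` there. The disk is therefore invariant, and iterating
gives `‖gⁿ z‖ ≤ ‖z‖^(3ⁿ)`, which tends to `0` when `‖z‖ < 1`. -/

open Filter Topology

lemma Complex.norm_mul_sub_le_norm_mul_sub {a b : ℝ} (hab : |a| ≤ |b|) {z : ℂ} (hz : ‖z‖ ≤ 1) :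
    ‖b * z - a‖ ≤ ‖a * z - b‖ := by
  have hz2 : z.re ^ 2 + z.im ^ 2 ≤ 1 := by
    have : Complex.normSq z ≤ 1 := by
      rw [Complex.normSq_eq_norm_sq]; nlinarith [norm_nonneg z]
    rwa [Complex.normSq_apply, ← sq, ← sq] at this
  have hab2 : a ^ 2 ≤ b ^ 2 := sq_le_sq.mpr hab
  rw [← sq_le_sq₀ (norm_nonneg _) (norm_nonneg _), Complex.sq_norm, Complex.sq_norm]
  simp only [Complex.normSq_apply, Complex.sub_re, Complex.sub_im, Complex.mul_re,
    Complex.mul_im, Complex.ofReal_re, Complex.ofReal_im]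
  -- the difference of the two sides is `(b² - a²)(1 - ‖z‖²)`
  nlinarith [mul_nonneg (sub_nonneg.mpr hab2) (sub_nonneg.mpr hz2)]

section Iterate

variable {E : Type*} [SeminormedAddGroup E] {f : E → E} {k : ℕ}

lemma norm_iterate_le_pow_pow (hf : ∀ z, ‖z‖ ≤ 1 → ‖f z‖ ≤ ‖z‖ ^ k) {z : E} (hz : ‖z‖ ≤ 1)
    (n : ℕ) : ‖f^[n] z‖ ≤ ‖z‖ ^ k ^ n := by
  induction n with
  | zero => simp
  | succ n ih =>
    have hle_one : ‖f^[n] z‖ ≤ 1 := ih.trans (pow_le_one₀ (norm_nonneg z) hz)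
    calc ‖f^[n + 1] z‖ = ‖f (f^[n] z)‖ := by rw [Function.iterate_succ_apply']
      _ ≤ ‖f^[n] z‖ ^ k := hf _ hle_one
      _ ≤ (‖z‖ ^ k ^ n) ^ k := pow_le_pow_left₀ (norm_nonneg _) ih k
      _ = ‖z‖ ^ k ^ (n + 1) := by rw [← pow_mul, pow_succ]

lemma tendsto_iterate_nhds_zero_of_norm_le_pow (hk : 1 < k)
    (hf : ∀ z, ‖z‖ ≤ 1 → ‖f z‖ ≤ ‖z‖ ^ k) {z : E} (hz : ‖z‖ < 1) :
    Tendsto (fun n ↦ f^[n] z) atTop (𝓝 0) := by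
  refine squeeze_zero_norm (fun n ↦ ?_) (tendsto_pow_atTop_nhds_zero_of_lt_one (norm_nonneg z) hz)
  calc ‖f^[n] z‖ ≤ ‖z‖ ^ k ^ n := norm_iterate_le_pow_pow hf hz.le n
    _ ≤ ‖z‖ ^ n := pow_le_pow_of_le_one (norm_nonneg z) hz.le (Nat.lt_pow_self hk).le

end Iterate

/-- For g(z) = -z^3(7z-4)/(4z-7) and |z| < 1, the iterates g^[n] z converge to 0,
and |g^[n] z| ≤ |z|^(3^n) for n ≥ 1. -/
theorem stmt_2 (g : ℂ → ℂ) (hg : ∀ z : ℂ, g z = -z ^ 3 * (7 * z - 4) / (4 * z - 7)) :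
    ∀ z : ℂ, ‖z‖ < 1 →
      Filter.Tendsto (fun n : ℕ => g^[n] z) Filter.atTop (nhds 0) ∧
      ∀ n : ℕ, 1 ≤ n → ‖g^[n] z‖ ≤ ‖z‖ ^ (3 ^ n) := by
  have hg_le : ∀ z, ‖z‖ ≤ 1 → ‖g z‖ ≤ ‖z‖ ^ 3 := by
    intro z hz
    have hfrac : ‖7 * z - 4‖ ≤ ‖4 * z - 7‖ := by
      exact_mod_cast Complex.norm_mul_sub_le_norm_mul_sub (a := 4) (b := 7) (by norm_num) hz
    rw [hg, norm_div, norm_mul, norm_neg, norm_pow, mul_div_assoc]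
    exact mul_le_of_le_one_right (by positivity) (div_le_one_of_le₀ hfrac (norm_nonneg _))
  intro z hz
  exact ⟨tendsto_iterate_nhds_zero_of_norm_le_pow (by norm_num) hg_le hz,
    fun n _ ↦ norm_iterate_le_pow_pow hg_le hz.le n⟩
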